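/- arXiv:quant-ph/0502165 — 2 statements merged into one kernel-verified Lean document; each statement's English description precedes it below -/
import Mathlib

section
/- Let ρ0 and ρ1 be n×n complex density matrices with a priori probabilities η0, η1 > 0, η0 + η1 = 1, let F = Tr(√(√ρ0 · ρ1 · √ρ0)) > 0, and let P1 be the orthogonal projection onto the range of ρ1 with Tr(P1 ρ0) > 0. If √η1 · F ≤ √η0 · Tr(P1 ρ0) (first regime), then for any USD POVM (E0, E1, E?) the failure probability Q = η0·Tr(E? ρ0) + η1·Tr(E? ρ1) satisfies Q ≥ η1·F²/Tr(P1 ρ0) + η0·Tr(P1 ρ0). -/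
open Matrix
open scoped ComplexOrder

/-- The positive semidefinite square root of a matrix (zero if the matrix is not
positive semidefinite). -/
noncomputable def msqrt {n : ℕ} (A : Matrix (Fin n) (Fin n) ℂ) : Matrix (Fin n) (Fin n) ℂ :=
  open scoped Classical in
  if h : A.PosSemidef then
    h.1.eigenvectorUnitary.1 * diagonal ((↑) ∘ (√·) ∘ h.1.eigenvalues) *
      (star h.1.eigenvectorUnitary : Matrix (Fin n) (Fin n) ℂ)
  else 0

noncomputable def Matrix.PosSemidef.sqrt {n : ℕ} {A : Matrix (Fin n) (Fin n) ℂ} (h : A.PosSemidef) :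
    Matrix (Fin n) (Fin n) ℂ :=
  h.1.eigenvectorUnitary.1 * diagonal ((↑) ∘ (√·) ∘ h.1.eigenvalues) *
    (star h.1.eigenvectorUnitary : Matrix (Fin n) (Fin n) ℂ)

lemma Matrix.PosSemidef.posSemidef_sqrt {n : ℕ} {A : Matrix (Fin n) (Fin n) ℂ}
    (h : A.PosSemidef) : h.sqrt.PosSemidef := by
  have hD : (diagonal ((↑) ∘ (√·) ∘ h.1.eigenvalues : Fin n → ℂ)).PosSemidef := by
    rw [posSemidef_diagonal_iff]
    intro i
    simp only [Function.comp_apply]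
    exact_mod_cast Real.sqrt_nonneg _
  have := hD.mul_mul_conjTranspose_same (h.1.eigenvectorUnitary.1)
  unfold Matrix.PosSemidef.sqrt
  convert this using 2
  simp [Unitary.coe_star, Matrix.star_eq_conjTranspose]

lemma Matrix.PosSemidef.sqrt_mul_self {n : ℕ} {A : Matrix (Fin n) (Fin n) ℂ}
    (h : A.PosSemidef) : h.sqrt * h.sqrt = A := by
  have hU : (star h.1.eigenvectorUnitary : Matrix (Fin n) (Fin n) ℂ) *
      h.1.eigenvectorUnitary.1 = 1 := Unitary.coe_star_mul_self _
  unfold Matrix.PosSemidef.sqrt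
  conv_rhs => rw [h.1.spectral_theorem, Unitary.conjStarAlgAut_apply]
  simp only [mul_assoc]
  rw [← mul_assoc (star h.1.eigenvectorUnitary : Matrix (Fin n) (Fin n) ℂ), hU, one_mul,
    ← mul_assoc (diagonal _), diagonal_mul_diagonal]
  congr 3
  funext i
  simp only [Function.comp_apply]
  rw [← Complex.ofReal_mul, Real.mul_self_sqrt (h.eigenvalues_nonneg i)]
  rfl

lemma trace_re_nonneg {n : ℕ} {A : Matrix (Fin n) (Fin n) ℂ} (hA : A.PosSemidef) :
    0 ≤ A.trace.re := by
  have : A.trace = ∑ i, A i i := rfl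
  rw [this, Complex.re_sum]
  refine Finset.sum_nonneg fun i _ => ?_
  have := hA.re_dotProduct_nonneg (Pi.single i 1)
  simpa [dotProduct, Pi.single_apply] using this

lemma trace_mul_re_nonneg {n : ℕ} {A B : Matrix (Fin n) (Fin n) ℂ}
    (hA : A.PosSemidef) (hB : B.PosSemidef) : 0 ≤ (A * B).trace.re := by
  have h1 : A * B = A * hB.sqrt * hB.sqrt := by
    rw [mul_assoc, hB.sqrt_mul_self]
  have h2 : (A * hB.sqrt * hB.sqrt).trace = (hB.sqrt * A * hB.sqrt).trace := by
    rw [trace_mul_cycle]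
  have h3 : (hB.sqrt * A * hB.sqrt).PosSemidef := by
    have := hA.conjTranspose_mul_mul_same hB.sqrt
    rwa [hB.posSemidef_sqrt.1.eq] at this
  rw [h1, h2]
  exact trace_re_nonneg h3

lemma eq_zero_of_trace_cts {n : ℕ} {C : Matrix (Fin n) (Fin n) ℂ}
    (h : (Cᴴ * C).trace = 0) : C = 0 := by
  have h2 : ∑ i, ∑ j, Complex.normSq (C j i) = 0 := by
    have h1 : (Cᴴ * C).trace = ∑ i, ∑ j, (Complex.normSq (C j i) : ℂ) := by
      simp [Matrix.trace, Matrix.diag, Matrix.mul_apply, Matrix.conjTranspose_apply,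
        Complex.normSq_eq_conj_mul_self]
    rw [h1] at h
    exact_mod_cast h
  ext i j
  have := (Finset.sum_eq_zero_iff_of_nonneg (fun i _ => Finset.sum_nonneg fun j _ => Complex.normSq_nonneg _)).mp h2
  have := (Finset.sum_eq_zero_iff_of_nonneg (fun j _ => Complex.normSq_nonneg _)).mp
    (this j (Finset.mem_univ _)) i (Finset.mem_univ _)
  simpa using Complex.normSq_eq_zero.mp this

lemma sqrt_mul_sqrt_eq_zero {n : ℕ} {A B : Matrix (Fin n) (Fin n) ℂ}
    (hA : A.PosSemidef) (hB : B.PosSemidef) (h : (A * B).trace = 0) :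
    hA.sqrt * hB.sqrt = 0 := by
  apply eq_zero_of_trace_cts
  have hct : (hA.sqrt * hB.sqrt)ᴴ = hB.sqrt * hA.sqrt := by
    rw [conjTranspose_mul, hA.posSemidef_sqrt.1.eq, hB.posSemidef_sqrt.1.eq]
  rw [hct]
  calc (hB.sqrt * hA.sqrt * (hA.sqrt * hB.sqrt)).trace
      = (hA.sqrt * hB.sqrt * (hB.sqrt * hA.sqrt)).trace := trace_mul_comm _ _
    _ = (hA.sqrt * (hB.sqrt * hB.sqrt) * hA.sqrt).trace := by
        rw [mul_assoc, ← mul_assoc hB.sqrt hB.sqrt hA.sqrt, ← mul_assoc]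
    _ = (hA.sqrt * hA.sqrt * (hB.sqrt * hB.sqrt)).trace := by rw [trace_mul_cycle]
    _ = (A * B).trace := by rw [hA.sqrt_mul_self, hB.sqrt_mul_self]
    _ = 0 := h

lemma trace_cs {n : ℕ} (X Y : Matrix (Fin n) (Fin n) ℂ) :
    ((Xᴴ * Y).trace.re) ^ 2 ≤ (Xᴴ * X).trace.re * (Yᴴ * Y).trace.re := by
  have key : ∀ (U V : Matrix (Fin n) (Fin n) ℂ),
      (inner (𝕜 := ℂ)
        ((WithLp.equiv 2 ((Fin n × Fin n) → ℂ)).symm (fun p => U p.1 p.2))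
        ((WithLp.equiv 2 ((Fin n × Fin n) → ℂ)).symm (fun p => V p.1 p.2))) = (Uᴴ * V).trace := by
    intro U V
    rw [Matrix.trace]
    simp only [PiLp.inner_apply, RCLike.inner_apply, Matrix.diag_apply, Matrix.mul_apply,
      Matrix.conjTranspose_apply, WithLp.equiv_symm_apply, PiLp.toLp_apply]
    rw [Fintype.sum_prod_type, Finset.sum_comm]
    simp [mul_comm]
  have hcs := inner_mul_inner_self_le (𝕜 := ℂ)
    ((WithLp.equiv 2 ((Fin n × Fin n) → ℂ)).symm (fun p => X p.1 p.2))
    ((WithLp.equiv 2 ((Fin n × Fin n) → ℂ)).symm (fun p => Y p.1 p.2))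
  rw [key X Y, key X X, key Y Y, key Y X] at hcs
  have h2 : ‖(Yᴴ * X).trace‖ = ‖(Xᴴ * Y).trace‖ := by
    have : (Yᴴ * X).trace = star ((Xᴴ * Y).trace) := by
      rw [show Yᴴ * X = (Xᴴ * Y)ᴴ by
        rw [Matrix.conjTranspose_mul, Matrix.conjTranspose_conjTranspose],
        Matrix.trace_conjTranspose]
    rw [this, norm_star]
  rw [h2] at hcs
  have h3 : ((Xᴴ * Y).trace.re) ^ 2 ≤ ‖(Xᴴ * Y).trace‖ * ‖(Xᴴ * Y).trace‖ := by
    rw [← pow_two, Complex.sq_norm, Complex.normSq_apply]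
    nlinarith [sq_nonneg ((Xᴴ * Y).trace.im)]
  exact h3.trans hcs

noncomputable def Dmat {n : ℕ} (U : Matrix (Fin n) (Fin n) ℂ) (d : Fin n → ℝ)
    (f : ℝ → ℝ) : Matrix (Fin n) (Fin n) ℂ :=
  U * diagonal (RCLike.ofReal ∘ f ∘ d) * star U

lemma Dmat_mul {n : ℕ} {U : Matrix (Fin n) (Fin n) ℂ} (hU : star U * U = 1)
    (d : Fin n → ℝ) (f g : ℝ → ℝ) :
    Dmat U d f * Dmat U d g = Dmat U d (fun x => f x * g x) := by
  unfold Dmat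
  have hUcancel : ∀ X : Matrix (Fin n) (Fin n) ℂ, star U * (U * X) = X := by
    intro X; rw [← mul_assoc, hU, one_mul]
  simp only [mul_assoc]
  rw [hUcancel, ← mul_assoc (diagonal (RCLike.ofReal ∘ f ∘ d)), diagonal_mul_diagonal]
  have hfun : (fun i => (RCLike.ofReal ∘ f ∘ d : Fin n → ℂ) i * (RCLike.ofReal ∘ g ∘ d : Fin n → ℂ) i)
      = (RCLike.ofReal ∘ (fun x => f x * g x) ∘ d : Fin n → ℂ) := by
    funext i; simp [Function.comp]
  rw [hfun]

lemma Dmat_congr {n : ℕ} (U : Matrix (Fin n) (Fin n) ℂ) (d : Fin n → ℝ) {f g : ℝ → ℝ}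
    (h : ∀ x, f x = g x) : Dmat U d f = Dmat U d g := by
  unfold Dmat
  have hfun : (RCLike.ofReal ∘ f ∘ d : Fin n → ℂ) = RCLike.ofReal ∘ g ∘ d := by
    funext i; simp [Function.comp, h]
  rw [hfun]

lemma Dmat_conjTranspose {n : ℕ} (U : Matrix (Fin n) (Fin n) ℂ) (d : Fin n → ℝ) (f : ℝ → ℝ) :
    (Dmat U d f)ᴴ = Dmat U d f := by
  unfold Dmat
  rw [conjTranspose_mul, conjTranspose_mul, diagonal_conjTranspose]
  rw [show (star U)ᴴ = U from conjTranspose_conjTranspose U, mul_assoc]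
  have hfun : (star (RCLike.ofReal ∘ f ∘ d) : Fin n → ℂ) = RCLike.ofReal ∘ f ∘ d := by
    funext i; simp [Function.comp, Pi.star_def]
  rw [hfun]; rfl

lemma spectral_proj {n : ℕ} {S : Matrix (Fin n) (Fin n) ℂ} (hS : S.PosSemidef) :
    ∃ P Sp : Matrix (Fin n) (Fin n) ℂ, Pᴴ = P ∧ Spᴴ = Sp ∧ P * P = P ∧ S * P = S ∧ P * S = S ∧
      Sp * S = P ∧ S * Sp = P ∧ Sp * P = Sp := by
  have hU : star (hS.1.eigenvectorUnitary : Matrix (Fin n) (Fin n) ℂ) *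
      (hS.1.eigenvectorUnitary : Matrix (Fin n) (Fin n) ℂ) = 1 :=
    Unitary.coe_star_mul_self hS.1.eigenvectorUnitary
  set U : Matrix (Fin n) (Fin n) ℂ := (hS.1.eigenvectorUnitary : Matrix (Fin n) (Fin n) ℂ)
  set d : Fin n → ℝ := hS.1.eigenvalues
  have hSD : S = Dmat U d id := by
    conv_lhs => rw [hS.1.spectral_theorem, Unitary.conjStarAlgAut_apply]
    rfl
  refine ⟨Dmat U d (fun x => if x = 0 then 0 else 1),
    Dmat U d (fun x => if x = 0 then 0 else x⁻¹),
    Dmat_conjTranspose _ _ _, Dmat_conjTranspose _ _ _, ?_, ?_, ?_, ?_, ?_, ?_⟩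
  · rw [Dmat_mul hU]
    exact Dmat_congr _ _ fun x => by by_cases h : x = 0 <;> simp [h]
  · rw [hSD, Dmat_mul hU]
    exact Dmat_congr _ _ fun x => by by_cases h : x = 0 <;> simp [h]
  · rw [hSD, Dmat_mul hU]
    exact Dmat_congr _ _ fun x => by by_cases h : x = 0 <;> simp [h]
  · rw [hSD, Dmat_mul hU]
    exact Dmat_congr _ _ fun x => by by_cases h : x = 0 <;> simp [h]
  · rw [hSD, Dmat_mul hU]
    exact Dmat_congr _ _ fun x => by by_cases h : x = 0 <;> simp [h]
  · rw [Dmat_mul hU]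
    exact Dmat_congr _ _ fun x => by by_cases h : x = 0 <;> simp [h]

lemma psd_one_sub_proj {n : ℕ} {R : Matrix (Fin n) (Fin n) ℂ} (hRh : Rᴴ = R) (hRR : R * R = R) :
    (1 - R).PosSemidef := by
  have h1 : (1 - R)ᴴ * (1 - R) = 1 - R := by
    rw [conjTranspose_sub, conjTranspose_one, hRh]
    simp only [mul_sub, sub_mul, one_mul, mul_one, hRR]
    abel
  have := Matrix.posSemidef_conjTranspose_mul_self (1 - R)
  rwa [h1] at this

lemma key_ineq {n : ℕ} {K M A B : Matrix (Fin n) (Fin n) ℂ} (hK : K.PosSemidef)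
    (hMK : Mᴴ * M = K) (hM : Bᴴ * A = M) :
    (hK.sqrt.trace.re) ^ 2 ≤ (Aᴴ * A).trace.re * (Bᴴ * B).trace.re := by
  have hSp : (hK.sqrt).PosSemidef := hK.posSemidef_sqrt
  have hSh : (hK.sqrt)ᴴ = hK.sqrt := hSp.1
  have hS2 : hK.sqrt * hK.sqrt = Mᴴ * M := by rw [hK.sqrt_mul_self, hMK]
  obtain ⟨P, Sp, hPh, hSph, hPP, hSP, hPS, hSpS, hSSp, hSpP⟩ := spectral_proj hSp
  -- M * P = M
  have hMP : M * P = M := by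
    have h1P : (1 - P) * hK.sqrt = 0 := by rw [sub_mul, one_mul, hPS, sub_self]
    have hz : (M * (1 - P))ᴴ * (M * (1 - P)) = 0 := by
      rw [conjTranspose_mul, conjTranspose_sub, conjTranspose_one, hPh]
      calc (1 - P) * Mᴴ * (M * (1 - P))
          = (1 - P) * (Mᴴ * M) * (1 - P) := by rw [mul_assoc, mul_assoc, mul_assoc]
        _ = (1 - P) * hK.sqrt * (hK.sqrt * (1 - P)) := by
            rw [← hS2, mul_assoc, mul_assoc, mul_assoc]
        _ = 0 := by rw [h1P, zero_mul]
    have h0 := Matrix.conjTranspose_mul_self_eq_zero.mp hz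
    have h2 : M - M * P = 0 := by rwa [mul_sub, mul_one] at h0
    exact (sub_eq_zero.mp h2).symm
  obtain ⟨W, hWW, hWM, hWP⟩ :
      ∃ W : Matrix (Fin n) (Fin n) ℂ, Wᴴ * W = P ∧ Wᴴ * M = hK.sqrt ∧ W * P = W := by
    refine ⟨M * Sp, ?_, ?_, ?_⟩
    · have hWh : (M * Sp)ᴴ = Sp * Mᴴ := by rw [conjTranspose_mul, hSph]
      rw [hWh]
      calc Sp * Mᴴ * (M * Sp) = Sp * (Mᴴ * M) * Sp := by
            rw [mul_assoc, mul_assoc, ← mul_assoc Mᴴ M Sp]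
        _ = (Sp * hK.sqrt) * (hK.sqrt * Sp) := by
            rw [← hS2]; noncomm_ring
        _ = P := by rw [hSpS, hSSp, hPP]
    · have hWh : (M * Sp)ᴴ = Sp * Mᴴ := by rw [conjTranspose_mul, hSph]
      rw [hWh]
      calc Sp * Mᴴ * M = Sp * (Mᴴ * M) := by rw [mul_assoc]
        _ = Sp * hK.sqrt * hK.sqrt := by rw [← hS2, ← mul_assoc, mul_assoc]
        _ = hK.sqrt := by rw [hSpS, hPS]
    · rw [mul_assoc, hSpP]
  have hRh : (W * Wᴴ)ᴴ = W * Wᴴ := by rw [conjTranspose_mul, conjTranspose_conjTranspose]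
  have hRR : (W * Wᴴ) * (W * Wᴴ) = W * Wᴴ := by
    calc W * Wᴴ * (W * Wᴴ) = W * ((Wᴴ * W) * Wᴴ) := by
          rw [mul_assoc, ← mul_assoc Wᴴ W Wᴴ]
      _ = W * (P * Wᴴ) := by rw [hWW]
      _ = (W * P) * Wᴴ := by rw [mul_assoc]
      _ = W * Wᴴ := by rw [hWP]
  -- Cauchy-Schwarz with X = B * W, Y = A
  have hcs := trace_cs (B * W) A
  have hXY : ((B * W)ᴴ * A) = hK.sqrt := by
    rw [conjTranspose_mul, mul_assoc, hM, hWM]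
  rw [hXY] at hcs
  have hXX : ((B * W)ᴴ * (B * W)).trace = ((Bᴴ * B) * (W * Wᴴ)).trace := by
    rw [conjTranspose_mul]
    calc (Wᴴ * Bᴴ * (B * W)).trace = (Wᴴ * ((Bᴴ * B) * W)).trace := by
          noncomm_ring
      _ = (((Bᴴ * B) * W) * Wᴴ).trace := trace_mul_comm _ _
      _ = ((Bᴴ * B) * (W * Wᴴ)).trace := by rw [mul_assoc]
  have hbound : ((Bᴴ * B) * (W * Wᴴ)).trace.re ≤ (Bᴴ * B).trace.re := by
    have hnn : 0 ≤ ((Bᴴ * B) * (1 - W * Wᴴ)).trace.re :=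
      trace_mul_re_nonneg (Matrix.posSemidef_conjTranspose_mul_self B) (psd_one_sub_proj hRh hRR)
    have hexp : ((Bᴴ * B) * (1 - W * Wᴴ)).trace = (Bᴴ * B).trace - ((Bᴴ * B) * (W * Wᴴ)).trace := by
      rw [mul_sub, mul_one, Matrix.trace_sub]
    rw [hexp, Complex.sub_re] at hnn
    linarith
  have hXXnn : 0 ≤ ((B * W)ᴴ * (B * W)).trace.re :=
    trace_re_nonneg (Matrix.posSemidef_conjTranspose_mul_self _)
  have hAAnn : 0 ≤ (Aᴴ * A).trace.re :=
    trace_re_nonneg (Matrix.posSemidef_conjTranspose_mul_self _)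
  rw [hXX] at hcs hXXnn
  nlinarith [hcs, hXXnn, hAAnn, hbound]

/-- `P` is the orthogonal projection onto the range (support) of `A`. -/
def IsRangeProj {n : ℕ} (A P : Matrix (Fin n) (Fin n) ℂ) : Prop :=
  P.IsHermitian ∧ P * P = P ∧
    LinearMap.range P.mulVecLin = LinearMap.range A.mulVecLin

/-- **Theorem 3, first regime.** If `√η1 · F ≤ √η0 · Tr(P1 ρ0)`, then any USD
POVM has failure probability `Q ≥ η1·F²/Tr(P1 ρ0) + η0·Tr(P1 ρ0)`. -/
theorem failure_bound_first_regime {n : ℕ}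
    (ρ0 ρ1 E0 E1 Eq P1 : Matrix (Fin n) (Fin n) ℂ)
    (hρ0 : ρ0.PosSemidef) (hρ0tr : ρ0.trace = 1)
    (hρ1 : ρ1.PosSemidef) (hρ1tr : ρ1.trace = 1)
    (η0 η1 : ℝ) (hη0 : 0 < η0) (hη1 : 0 < η1) (hη : η0 + η1 = 1)
    (hP1 : IsRangeProj ρ1 P1)
    (hF : 0 < (msqrt (msqrt ρ0 * ρ1 * msqrt ρ0)).trace.re)
    (hT1 : 0 < (P1 * ρ0).trace.re)
    (hregime : Real.sqrt η1 * (msqrt (msqrt ρ0 * ρ1 * msqrt ρ0)).trace.re ≤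
      Real.sqrt η0 * (P1 * ρ0).trace.re)
    (hE0 : E0.PosSemidef) (hE1 : E1.PosSemidef) (hEq : Eq.PosSemidef)
    (hsum : E0 + E1 + Eq = 1)
    (husd0 : (E0 * ρ1).trace = 0) (husd1 : (E1 * ρ0).trace = 0) :
    η1 * ((msqrt (msqrt ρ0 * ρ1 * msqrt ρ0)).trace.re) ^ 2 / (P1 * ρ0).trace.re +
        η0 * (P1 * ρ0).trace.re ≤
      η0 * (Eq * ρ0).trace.re + η1 * (Eq * ρ1).trace.re := by
  classical
  have hs0 : msqrt ρ0 = hρ0.sqrt := dif_pos hρ0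
  have hs1 : msqrt ρ1 = hρ1.sqrt := dif_pos hρ1
  have hsEq : msqrt Eq = hEq.sqrt := dif_pos hEq
  have hs0H : (msqrt ρ0)ᴴ = msqrt ρ0 := by rw [hs0]; exact hρ0.posSemidef_sqrt.1.eq
  have hs1H : (msqrt ρ1)ᴴ = msqrt ρ1 := by rw [hs1]; exact hρ1.posSemidef_sqrt.1.eq
  have hsEqH : (msqrt Eq)ᴴ = msqrt Eq := by rw [hsEq]; exact hEq.posSemidef_sqrt.1.eq
  have hs0mul : msqrt ρ0 * msqrt ρ0 = ρ0 := by rw [hs0]; exact hρ0.sqrt_mul_self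
  have hs1mul : msqrt ρ1 * msqrt ρ1 = ρ1 := by rw [hs1]; exact hρ1.sqrt_mul_self
  have hsEqmul : msqrt Eq * msqrt Eq = Eq := by rw [hsEq]; exact hEq.sqrt_mul_self
  -- K and its positivity
  have hMKeq : (msqrt ρ1 * msqrt ρ0)ᴴ * (msqrt ρ1 * msqrt ρ0) = msqrt ρ0 * ρ1 * msqrt ρ0 := by
    rw [conjTranspose_mul, hs0H, hs1H]
    calc msqrt ρ0 * msqrt ρ1 * (msqrt ρ1 * msqrt ρ0)
        = msqrt ρ0 * (msqrt ρ1 * msqrt ρ1) * msqrt ρ0 := by noncomm_ring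
      _ = msqrt ρ0 * ρ1 * msqrt ρ0 := by rw [hs1mul]
  have hKpsd : (msqrt ρ0 * ρ1 * msqrt ρ0).PosSemidef := by
    rw [← hMKeq]; exact Matrix.posSemidef_conjTranspose_mul_self _
  have hmsK : msqrt (msqrt ρ0 * ρ1 * msqrt ρ0) = hKpsd.sqrt := dif_pos hKpsd
  rw [hmsK] at hF hregime ⊢
  -- zero relations from the USD conditions
  have h01 : hE0.sqrt * hρ1.sqrt = 0 := sqrt_mul_sqrt_eq_zero hE0 hρ1 husd0
  have h10 : hE1.sqrt * hρ0.sqrt = 0 := sqrt_mul_sqrt_eq_zero hE1 hρ0 husd1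
  have hE0s1 : E0 * msqrt ρ1 = 0 := by
    rw [hs1, ← hE0.sqrt_mul_self, mul_assoc, h01, mul_zero]
  have hE1s0 : E1 * msqrt ρ0 = 0 := by
    rw [hs0, ← hE1.sqrt_mul_self, mul_assoc, h10, mul_zero]
  have hs1E0 : msqrt ρ1 * E0 = 0 := by
    have := congrArg conjTranspose hE0s1
    rwa [conjTranspose_mul, hs1H, hE0.1.eq, conjTranspose_zero] at this
  have hE0ρ1 : E0 * ρ1 = 0 := by
    rw [← hs1mul, ← mul_assoc, hE0s1, zero_mul]
  -- E0 is orthogonal to the support of ρ1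
  have hE0P1 : E0 * P1 = 0 := by
    ext i j
    have hv : P1 *ᵥ (Pi.single j 1) ∈ LinearMap.range ρ1.mulVecLin := by
      rw [← hP1.2.2]; exact ⟨Pi.single j 1, rfl⟩
    obtain ⟨w, hw⟩ := hv
    have hz : (E0 * P1) *ᵥ (Pi.single j 1) = 0 := by
      rw [Matrix.mulVecLin_apply] at hw
      rw [← Matrix.mulVec_mulVec, ← hw, Matrix.mulVec_mulVec, hE0ρ1, Matrix.zero_mulVec]
    simpa using congrFun hz i
  have hP1E0 : P1 * E0 = 0 := by
    have := congrArg conjTranspose hE0P1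
    rwa [conjTranspose_mul, hP1.1.eq, hE0.1.eq, conjTranspose_zero] at this
  -- Eq in terms of the others
  have hEqdef : Eq = 1 - E0 - E1 := by rw [← hsum]; abel
  have h1E0 : E1 + Eq = 1 - E0 := by rw [← hsum]; abel
  -- 1 - P1 - E0 is PSD
  have hpsd1 : (1 - P1 - E0).PosSemidef := by
    have hps := (hE1.add hEq).conjTranspose_mul_mul_same (1 - P1)
    have hconj : (1 - P1)ᴴ = 1 - P1 := by
      rw [conjTranspose_sub, conjTranspose_one, hP1.1.eq]
    have hexp : (1 - P1)ᴴ * (E1 + Eq) * (1 - P1) = 1 - P1 - E0 := by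
      rw [hconj, h1E0]
      have expand : (1 - P1) * (1 - E0) * (1 - P1) =
          1 - P1 - E0 + E0 * P1 - P1 + P1 * P1 + P1 * E0 - P1 * (E0 * P1) := by
        noncomm_ring
      rw [expand, hE0P1, hP1E0, hP1.2.1]
      simp
    rwa [hexp] at hps
  -- trace bound: T ≤ q0
  have htr_ineq : 0 ≤ ((1 - P1 - E0) * ρ0).trace.re := trace_mul_re_nonneg hpsd1 hρ0
  have hexp2 : ((1 - P1 - E0) * ρ0).trace = ρ0.trace - (P1 * ρ0).trace - (E0 * ρ0).trace := by
    simp only [Matrix.sub_mul, Matrix.one_mul, Matrix.trace_sub]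
  rw [hexp2, hρ0tr] at htr_ineq
  simp only [Complex.sub_re, Complex.one_re] at htr_ineq
  have hq0eq : (Eq * ρ0).trace = ρ0.trace - (E0 * ρ0).trace - (E1 * ρ0).trace := by
    rw [hEqdef]; simp only [Matrix.sub_mul, Matrix.one_mul, Matrix.trace_sub]
  have hq0re : (Eq * ρ0).trace.re = 1 - (E0 * ρ0).trace.re := by
    rw [hq0eq, husd1, hρ0tr]
    simp [Complex.sub_re]
  have hq0T : (P1 * ρ0).trace.re ≤ (Eq * ρ0).trace.re := by rw [hq0re]; linarith
  have hq1nn : 0 ≤ (Eq * ρ1).trace.re := trace_mul_re_nonneg hEq hρ1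
  -- fidelity bound : F² ≤ q0 q1
  have hmid : msqrt ρ1 * Eq * msqrt ρ0 = msqrt ρ1 * msqrt ρ0 := by
    rw [hEqdef]
    calc msqrt ρ1 * (1 - E0 - E1) * msqrt ρ0
        = msqrt ρ1 * msqrt ρ0 - (msqrt ρ1 * E0) * msqrt ρ0
            - msqrt ρ1 * (E1 * msqrt ρ0) := by noncomm_ring
      _ = msqrt ρ1 * msqrt ρ0 := by
          rw [hs1E0, hE1s0, zero_mul, mul_zero, sub_zero, sub_zero]
  have hBA : (msqrt Eq * msqrt ρ1)ᴴ * (msqrt Eq * msqrt ρ0) = msqrt ρ1 * msqrt ρ0 := by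
    rw [conjTranspose_mul, hs1H, hsEqH]
    calc msqrt ρ1 * msqrt Eq * (msqrt Eq * msqrt ρ0)
        = msqrt ρ1 * (msqrt Eq * msqrt Eq) * msqrt ρ0 := by noncomm_ring
      _ = msqrt ρ1 * Eq * msqrt ρ0 := by rw [hsEqmul]
      _ = msqrt ρ1 * msqrt ρ0 := hmid
  have hkey := key_ineq hKpsd hMKeq hBA
  have htrA : ((msqrt Eq * msqrt ρ0)ᴴ * (msqrt Eq * msqrt ρ0)).trace = (Eq * ρ0).trace := by
    rw [conjTranspose_mul, hs0H, hsEqH]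
    calc (msqrt ρ0 * msqrt Eq * (msqrt Eq * msqrt ρ0)).trace
        = (msqrt ρ0 * (msqrt Eq * msqrt Eq) * msqrt ρ0).trace := by noncomm_ring
      _ = (msqrt ρ0 * Eq * msqrt ρ0).trace := by rw [hsEqmul]
      _ = (msqrt ρ0 * msqrt ρ0 * Eq).trace := by rw [trace_mul_cycle]
      _ = (Eq * ρ0).trace := by rw [hs0mul, trace_mul_comm]
  have htrB : ((msqrt Eq * msqrt ρ1)ᴴ * (msqrt Eq * msqrt ρ1)).trace = (Eq * ρ1).trace := by
    rw [conjTranspose_mul, hs1H, hsEqH]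
    calc (msqrt ρ1 * msqrt Eq * (msqrt Eq * msqrt ρ1)).trace
        = (msqrt ρ1 * (msqrt Eq * msqrt Eq) * msqrt ρ1).trace := by noncomm_ring
      _ = (msqrt ρ1 * Eq * msqrt ρ1).trace := by rw [hsEqmul]
      _ = (msqrt ρ1 * msqrt ρ1 * Eq).trace := by rw [trace_mul_cycle]
      _ = (Eq * ρ1).trace := by rw [hs1mul, trace_mul_comm]
  rw [htrA, htrB] at hkey
  -- squared regime condition
  have hreg2 : η1 * (hKpsd.sqrt.trace.re) ^ 2 ≤ η0 * ((P1 * ρ0).trace.re) ^ 2 := by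
    have h1 : (Real.sqrt η1 * hKpsd.sqrt.trace.re) ^ 2 ≤
        (Real.sqrt η0 * (P1 * ρ0).trace.re) ^ 2 := by
      apply pow_le_pow_left₀ (by positivity) hregime
    rw [mul_pow, mul_pow, Real.sq_sqrt hη1.le, Real.sq_sqrt hη0.le] at h1
    exact h1
  -- final algebra
  have hq0pos : 0 < (Eq * ρ0).trace.re := lt_of_lt_of_le hT1 hq0T
  have hdiv : η1 * (hKpsd.sqrt.trace.re) ^ 2 / (P1 * ρ0).trace.re ≤
      η0 * (Eq * ρ0).trace.re + η1 * (Eq * ρ1).trace.re - η0 * (P1 * ρ0).trace.re := by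
    rw [div_le_iff₀ hT1]
    nlinarith [mul_nonneg (sub_nonneg.2 hq0T)
        (sub_nonneg.2 (le_trans hreg2 (by nlinarith [mul_nonneg hη0.le (mul_nonneg (sub_nonneg.2 hq0T) hT1.le)] :
          η0 * ((P1 * ρ0).trace.re) ^ 2 ≤ η0 * (Eq * ρ0).trace.re * (P1 * ρ0).trace.re))),
      mul_nonneg (mul_nonneg hη1.le hT1.le) (sub_nonneg.2 hkey), hq0pos, hT1, hη1.le, hη0.le]
  linarith
end

section
/- Let ρ0 and ρ1 be n×n complex density matrices and let F = Tr(√(√ρ0 · ρ1 · √ρ0)) be their fidelity. Then F² ≤ Tr(P1 ρ0) and F² ≤ Tr(P0 ρ1), where P0 and P1 are the orthogonal projections onto the ranges of ρ0 and ρ1. -/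
open Matrix
open scoped ComplexOrder

/-!
With `s₀ = √ρ₀` and `s₁ = √ρ₁`, the fidelity is the trace of `B = √((s₁ s₀)ᴴ (s₁ s₀))`, the
trace norm of `s₁ s₀`. For any factorization `s₁ s₀ = Yᴴ Z`, the polar decomposition gives a
contraction `W` with `Wᴴ Yᴴ Z = B`, and Cauchy–Schwarz for the Frobenius inner product yields
`(Tr B)² ≤ Tr(Yᴴ Y) · Tr(Zᴴ Z)`. Since `Pᵢ sᵢ = sᵢ`, the factorizations `s₁ᴴ (P₁ s₀)` and
`(P₀ s₁)ᴴ s₀` give the two bounds, as `Tr ρ₀ = Tr ρ₁ = 1`.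
-/

open scoped MatrixOrder

namespace Matrix

variable {ι 𝕜 : Type*} [Fintype ι] [RCLike 𝕜]

lemma norm_trace_mul_conjTranspose_sq_le (Y Z : Matrix ι ι 𝕜) :
    ‖(Y * Zᴴ).trace‖ ^ 2 ≤ RCLike.re (Y * Yᴴ).trace * RCLike.re (Z * Zᴴ).trace := by
  classical
  let := toMatrixSeminormedAddCommGroup (1 : Matrix ι ι 𝕜) PosSemidef.one
  let := toMatrixInnerProductSpace (1 : Matrix ι ι 𝕜) PosSemidef.one
  have hinner (U V : Matrix ι ι 𝕜) : inner 𝕜 U V = (V * Uᴴ).trace := by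
    change (V * 1 * Uᴴ).trace = _
    rw [Matrix.mul_one]
  have hre (U : Matrix ι ι 𝕜) : RCLike.re (U * Uᴴ).trace = ‖U‖ ^ 2 := by
    rw [← hinner, ← inner_self_eq_norm_sq (𝕜 := 𝕜)]
  rw [hre, hre, ← hinner, ← mul_pow, mul_comm]
  exact pow_le_pow_left₀ (norm_nonneg _) (norm_inner_le_norm _ _) 2

lemma _root_.IsStarProjection.trace_conjTranspose_mul_self {P : Matrix ι ι 𝕜}
    (hP : IsStarProjection P) (S : Matrix ι ι 𝕜) :
    ((P * S)ᴴ * (P * S)).trace = (P * (S * Sᴴ)).trace := by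
  have hPP : Pᴴ * P = P := by
    rw [← star_eq_conjTranspose, hP.isSelfAdjoint.star_eq, hP.isIdempotentElem.eq]
  rw [conjTranspose_mul, Matrix.mul_assoc, ← Matrix.mul_assoc Pᴴ, hPP, trace_mul_comm,
    Matrix.mul_assoc]

variable [DecidableEq ι]

lemma re_trace_mul_mul_conjTranspose_le {C : Matrix ι ι 𝕜} (hC : C ≤ 1) (S : Matrix ι ι 𝕜) :
    RCLike.re (S * C * Sᴴ).trace ≤ RCLike.re (S * Sᴴ).trace := by
  have h := ((le_iff.mp hC).mul_mul_conjTranspose_same S).trace_nonneg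
  rw [Matrix.mul_sub, Matrix.sub_mul, Matrix.mul_one, trace_sub, sub_nonneg] at h
  exact RCLike.re_le_re h

/-- The witness is `W = X B⁺`, where `B⁺ = cfc (·⁻¹) B` is the pseudo-inverse of `B` thanks to
`0⁻¹ = 0`; then `Wᴴ W = B B⁺` is the projection onto the range of `B`. -/
lemma exists_conjTranspose_mul_eq_of_mul_self_eq {B X : Matrix ι ι 𝕜} (hB : B.IsHermitian)
    (h : B * B = Xᴴ * X) : ∃ W : Matrix ι ι 𝕜, Wᴴ * X = B ∧ Wᴴ * W ≤ 1 := by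
  set C := cfc (·⁻¹ : ℝ → ℝ) B
  have hinv : ContinuousOn (·⁻¹ : ℝ → ℝ) (spectrum ℝ B) := B.finite_real_spectrum.continuousOn _
  have hC : Cᴴ = C := (cfc_predicate (p := IsSelfAdjoint) _ B).star_eq
  have hCBB : C * (B * B) = B := by
    conv_lhs => rw [← cfc_id' ℝ B hB.isSelfAdjoint, ← cfc_mul .., ← cfc_mul (hf := hinv) ..]
    simp only [← mul_assoc, inv_mul_mul_self]
    exact cfc_id' ℝ B hB.isSelfAdjoint
  refine ⟨X * C, ?_, ?_⟩
  · rw [conjTranspose_mul, hC, Matrix.mul_assoc, ← h, hCBB]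
  · rw [conjTranspose_mul, hC]
    calc C * Xᴴ * (X * C) = C * (B * B) * C := by simp only [h, Matrix.mul_assoc]
      _ = cfc (fun x : ℝ => x * x⁻¹) B := by
          rw [hCBB, cfc_mul (hg := hinv) .., cfc_id' ℝ B hB.isSelfAdjoint]
      _ ≤ 1 := cfc_le_one _ B fun x _ => by
          rcases eq_or_ne x 0 with rfl | hx
          · simp
          · simp [hx]

/-- Trace-norm Cauchy–Schwarz `‖Yᴴ Z‖₁ ≤ ‖Y‖₂ ‖Z‖₂`, with `B` any Hermitian square root of
`|Yᴴ Z|²`. -/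
lemma re_trace_sq_le_of_mul_self_eq {B Y Z : Matrix ι ι 𝕜} (hB : B.IsHermitian)
    (h : B * B = (Yᴴ * Z)ᴴ * (Yᴴ * Z)) :
    RCLike.re B.trace ^ 2 ≤ RCLike.re (Yᴴ * Y).trace * RCLike.re (Zᴴ * Z).trace := by
  obtain ⟨W, hWX, hWW⟩ := exists_conjTranspose_mul_eq_of_mul_self_eq hB h
  have htrace : B.trace = (Yᴴ * (W * Zᴴ)ᴴ).trace := by
    rw [← hWX, conjTranspose_mul, conjTranspose_conjTranspose, trace_mul_comm, Matrix.mul_assoc]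
  have hWZ : RCLike.re ((W * Zᴴ) * (W * Zᴴ)ᴴ).trace ≤ RCLike.re (Zᴴ * Z).trace := by
    calc RCLike.re ((W * Zᴴ) * (W * Zᴴ)ᴴ).trace = RCLike.re (Z * (Wᴴ * W) * Zᴴ).trace := by
          rw [conjTranspose_mul, conjTranspose_conjTranspose, trace_mul_comm (W * Zᴴ)]
          simp only [Matrix.mul_assoc]
      _ ≤ RCLike.re (Z * Zᴴ).trace := re_trace_mul_mul_conjTranspose_le hWW Z
      _ = RCLike.re (Zᴴ * Z).trace := by rw [trace_mul_comm]
  have hY : 0 ≤ RCLike.re (Yᴴ * Y).trace :=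
    (RCLike.nonneg_iff.mp (posSemidef_conjTranspose_mul_self Y).trace_nonneg).1
  calc RCLike.re B.trace ^ 2 ≤ ‖B.trace‖ ^ 2 := by
        rw [← sq_abs]; exact pow_le_pow_left₀ (abs_nonneg _) (RCLike.abs_re_le_norm _) 2
    _ ≤ RCLike.re (Yᴴ * Y).trace * RCLike.re ((W * Zᴴ) * (W * Zᴴ)ᴴ).trace := by
        simpa only [htrace, conjTranspose_conjTranspose] using
          norm_trace_mul_conjTranspose_sq_le Yᴴ (W * Zᴴ)
    _ ≤ RCLike.re (Yᴴ * Y).trace * RCLike.re (Zᴴ * Z).trace := mul_le_mul_of_nonneg_left hWZ hY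

end Matrix

section
variable {n : ℕ} {A P : Matrix (Fin n) (Fin n) ℂ}

lemma msqrt_eq_cfcSqrt (hA : A.PosSemidef) : msqrt A = CFC.sqrt A := by
  rw [CFC.sqrt_eq_real_sqrt A hA.nonneg, cfcₙ_eq_cfc, hA.1.cfc_eq, IsHermitian.cfc,
    Unitary.conjStarAlgAut_apply, msqrt, dif_pos hA]
  rfl

lemma isHermitian_msqrt (A : Matrix (Fin n) (Fin n) ℂ) : (msqrt A).IsHermitian := by
  by_cases hA : A.PosSemidef
  · rw [msqrt_eq_cfcSqrt hA]
    exact (CFC.sqrt_nonneg A).isSelfAdjoint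
  · rw [msqrt, dif_neg hA]
    exact isHermitian_zero

lemma msqrt_mul_self (hA : A.PosSemidef) : msqrt A * msqrt A = A := by
  rw [msqrt_eq_cfcSqrt hA, CFC.sqrt_mul_sqrt_self A hA.nonneg]

lemma IsRangeProj.isStarProjection (hP : IsRangeProj A P) : IsStarProjection P :=
  ⟨hP.2.1, hP.1⟩

lemma IsRangeProj.mul_eq (hP : IsRangeProj A P) : P * A = A := by
  refine Matrix.toLin'.injective (LinearMap.ext fun x => ?_)
  obtain ⟨y, hy⟩ : A *ᵥ x ∈ LinearMap.range P.mulVecLin := hP.2.2 ▸ ⟨x, rfl⟩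
  simp only [mulVecLin_apply] at hy
  simp [Matrix.toLin'_mul, ← hy, mulVec_mulVec, hP.2.1]

lemma IsRangeProj.mul_msqrt (hP : IsRangeProj A P) (hA : A.PosSemidef) :
    P * msqrt A = msqrt A := by
  have h : (1 - P) * (msqrt A * (msqrt A)ᴴ) = 0 := by
    rw [(isHermitian_msqrt A).eq, msqrt_mul_self hA, Matrix.sub_mul, Matrix.one_mul, hP.mul_eq,
      sub_self]
  rw [mul_self_mul_conjTranspose_eq_zero, Matrix.sub_mul, Matrix.one_mul, sub_eq_zero] at h
  exact h.symm

end

/-- The squared fidelity of two density matrices is bounded by `Tr(P1 ρ0)` and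
by `Tr(P0 ρ1)`. -/
theorem fidelity_sq_le_trace_proj {n : ℕ}
    (ρ0 ρ1 P0 P1 : Matrix (Fin n) (Fin n) ℂ)
    (hρ0 : ρ0.PosSemidef) (hρ0tr : ρ0.trace = 1)
    (hρ1 : ρ1.PosSemidef) (hρ1tr : ρ1.trace = 1)
    (hP0 : IsRangeProj ρ0 P0) (hP1 : IsRangeProj ρ1 P1) :
    ((msqrt (msqrt ρ0 * ρ1 * msqrt ρ0)).trace.re) ^ 2 ≤ (P1 * ρ0).trace.re ∧
      ((msqrt (msqrt ρ0 * ρ1 * msqrt ρ0)).trace.re) ^ 2 ≤ (P0 * ρ1).trace.re := by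
  set s0 := msqrt ρ0
  set s1 := msqrt ρ1
  have hs0 : s0ᴴ = s0 := (isHermitian_msqrt ρ0).eq
  have hs1 : s1ᴴ = s1 := (isHermitian_msqrt ρ1).eq
  have hs0sq : s0 * s0 = ρ0 := msqrt_mul_self hρ0
  have hs1sq : s1 * s1 = ρ1 := msqrt_mul_self hρ1
  have hB : msqrt (s0 * ρ1 * s0) * msqrt (s0 * ρ1 * s0) = (s1 * s0)ᴴ * (s1 * s0) := by
    have hA : (s0 * ρ1 * s0).PosSemidef := by
      simpa only [hs0] using hρ1.mul_mul_conjTranspose_same s0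
    rw [msqrt_mul_self hA, conjTranspose_mul, hs0, hs1, ← hs1sq]
    simp only [Matrix.mul_assoc]
  have hfactor1 : s1 * s0 = s1ᴴ * (P1 * s0) := by
    rw [← Matrix.mul_assoc, ← hP1.1.eq, ← conjTranspose_mul, hP1.mul_msqrt hρ1, hs1]
  have hfactor0 : s1 * s0 = (P0 * s1)ᴴ * s0 := by
    rw [conjTranspose_mul, hP0.1.eq, Matrix.mul_assoc, hP0.mul_msqrt hρ0, hs1]
  have hF := fun {Y Z} (hX : s1 * s0 = Yᴴ * Z) =>
    re_trace_sq_le_of_mul_self_eq (isHermitian_msqrt (s0 * ρ1 * s0)) (hX ▸ hB)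
  constructor
  · calc _ ≤ (s1ᴴ * s1).trace.re * ((P1 * s0)ᴴ * (P1 * s0)).trace.re := hF hfactor1
      _ = (P1 * ρ0).trace.re := by
        rw [hP1.isStarProjection.trace_conjTranspose_mul_self, hs0, hs1, hs0sq, hs1sq, hρ1tr]
        simp
  · calc _ ≤ ((P0 * s1)ᴴ * (P0 * s1)).trace.re * (s0ᴴ * s0).trace.re := hF hfactor0
      _ = (P0 * ρ1).trace.re := by
        rw [hP0.isStarProjection.trace_conjTranspose_mul_self, hs0, hs1, hs0sq, hs1sq, hρ0tr]
        simp
end
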